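/- Let p, γ ∈ [0,1] and define the generalized-amplitude-damping Kraus operators K₀ = √p·!![1, 0; 0, √(1−γ)], K₁ = √p·!![0, √γ; 0, 0], K₂ = √(1−p)·!![√(1−γ), 0; 0, 1], K₃ = √(1−p)·!![0, 0; √γ, 0]. Then Σᵢ Kᵢ†Kᵢ = 𝟙, and for the projectors Π± = (1/2)(𝟙 ± Q(Θ,Φ)) one has Σᵢ Kᵢ†Π±Kᵢ = (1/2)((1 ± (2p−1)γ cosΘ)𝟙 ± v·σ) with v = (√(1−γ) sinΘ cosΦ, −√(1−γ) sinΘ sinΦ, (1−γ) cosΘ); in particular the induced POVM has bias of magnitude |(2p−1)γ cosΘ| and sharpness ‖v‖ = √((1−γ)(sin²Θ + (1−γ)cos²Θ)). -/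

import Mathlib

open Matrix

/-- Pauli matrix σ₁. -/
noncomputable def σ1 : Matrix (Fin 2) (Fin 2) ℂ := !![0, 1; 1, 0]
/-- Pauli matrix σ₂. -/
noncomputable def σ2 : Matrix (Fin 2) (Fin 2) ℂ := !![0, -Complex.I; Complex.I, 0]
/-- Pauli matrix σ₃. -/
noncomputable def σ3 : Matrix (Fin 2) (Fin 2) ℂ := !![1, 0; 0, -1]

/-- The three Pauli matrices, indexed. -/
noncomputable def pauli : Fin 3 → Matrix (Fin 2) (Fin 2) ℂ
  | 0 => σ1
  | 1 => σ2
  | 2 => σ3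

/-- `v · σ = v₁σ₁ + v₂σ₂ + v₃σ₃` for `v ∈ ℝ³`. -/
noncomputable def dotσ (v : Fin 3 → ℝ) : Matrix (Fin 2) (Fin 2) ℂ :=
  ∑ i, (v i : ℂ) • pauli i

/-- Euclidean norm of `v ∈ ℝ³`. -/
noncomputable def enorm3 (v : Fin 3 → ℝ) : ℝ := Real.sqrt (v 0 ^ 2 + v 1 ^ 2 + v 2 ^ 2)

/-- The dichotomic observable `Q(Θ,Φ)`. -/
noncomputable def Qobs (Θ Φ : ℝ) : Matrix (Fin 2) (Fin 2) ℂ :=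
  !![(Real.cos Θ : ℂ), Complex.exp (Φ * Complex.I) * (Real.sin Θ : ℂ);
     Complex.exp (-Φ * Complex.I) * (Real.sin Θ : ℂ), -(Real.cos Θ : ℂ)]

/-- The spectral projectors `Π_s = (1/2)(𝟙 + s·Q(Θ,Φ))`, sign `s = ±1`. -/
noncomputable def projQ (Θ Φ s : ℝ) : Matrix (Fin 2) (Fin 2) ℂ :=
  (1/2 : ℂ) • (1 + (s : ℂ) • Qobs Θ Φ)

/-- Kraus operators of the generalized amplitude damping channel. -/
noncomputable def gadK (p γ : ℝ) : Fin 4 → Matrix (Fin 2) (Fin 2) ℂ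
  | 0 => (Real.sqrt p : ℂ) • !![1, 0; 0, (Real.sqrt (1 - γ) : ℂ)]
  | 1 => (Real.sqrt p : ℂ) • !![0, (Real.sqrt γ : ℂ); 0, 0]
  | 2 => (Real.sqrt (1 - p) : ℂ) • !![(Real.sqrt (1 - γ) : ℂ), 0; 0, 1]
  | 3 => (Real.sqrt (1 - p) : ℂ) • !![0, 0; (Real.sqrt γ : ℂ), 0]


/-! In the Pauli basis the Heisenberg-picture GAD channel `X ↦ ∑ Kᵢ† X Kᵢ` is the affine map
`t𝟙 + u·σ ↦ (t + (2p−1)γu₃)𝟙 + (√(1−γ)u₁, √(1−γ)u₂, (1−γ)u₃)·σ`. Since `Q(Θ,Φ) = n·σ` for the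
unit vector `n = (sinΘ cosΦ, −sinΘ sinΦ, cosΘ)`, applying it to `Π± = ½(𝟙 ± n·σ)` gives the
stated POVM, and applying it to `𝟙` gives trace preservation. -/

open Complex

lemma dotσ_eq (v : Fin 3 → ℝ) :
    dotσ v = !![(v 2 : ℂ), v 0 - v 1 * I; v 0 + v 1 * I, -v 2] := by
  ext i j
  fin_cases i <;> fin_cases j <;>
    simp [dotσ, pauli, σ1, σ2, σ3, Fin.sum_univ_three]; ring

lemma dotσ_smul (c : ℝ) (v : Fin 3 → ℝ) : dotσ (c • v) = (c : ℂ) • dotσ v := by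
  simp only [dotσ, Finset.smul_sum, smul_smul, Pi.smul_apply, smul_eq_mul, ofReal_mul]

lemma dotσ_zero : dotσ 0 = 0 := by
  simpa using dotσ_smul 0 0

lemma Qobs_eq_dotσ (Θ Φ : ℝ) :
    Qobs Θ Φ = dotσ ![Real.sin Θ * Real.cos Φ, -(Real.sin Θ * Real.sin Φ), Real.cos Θ] := by
  rw [dotσ_eq, Qobs, exp_mul_I, exp_mul_I, cos_neg, sin_neg]
  ext i j
  fin_cases i <;> fin_cases j <;> simp <;> ring

noncomputable def gadDual (p γ : ℝ) (X : Matrix (Fin 2) (Fin 2) ℂ) : Matrix (Fin 2) (Fin 2) ℂ :=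
  ∑ i, (gadK p γ i)ᴴ * X * gadK p γ i

lemma gadDual_smul (p γ : ℝ) (c : ℂ) (X : Matrix (Fin 2) (Fin 2) ℂ) :
    gadDual p γ (c • X) = c • gadDual p γ X := by
  simp only [gadDual, Finset.smul_sum, Matrix.mul_smul, Matrix.smul_mul]

lemma ofReal_sqrt_mul_self {t : ℝ} (ht : 0 ≤ t) : (√t : ℂ) * √t = t := by
  rw [← ofReal_mul, Real.mul_self_sqrt ht]

lemma gadDual_bloch {p γ : ℝ} (hp : 0 ≤ p ∧ p ≤ 1) (hγ : 0 ≤ γ ∧ γ ≤ 1)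
    (t : ℝ) (u : Fin 3 → ℝ) :
    gadDual p γ ((t : ℂ) • 1 + dotσ u)
      = ((t + (2 * p - 1) * γ * u 2 : ℝ) : ℂ) • 1
        + dotσ ![√(1 - γ) * u 0, √(1 - γ) * u 1, (1 - γ) * u 2] := by
  have hp0 := ofReal_sqrt_mul_self hp.1
  have hp1 := ofReal_sqrt_mul_self (sub_nonneg.2 hp.2)
  have hγ0 := ofReal_sqrt_mul_self hγ.1
  have hγ1 := ofReal_sqrt_mul_self (sub_nonneg.2 hγ.2)
  rw [gadDual, Fin.sum_univ_four, dotσ_eq, dotσ_eq]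
  ext i j
  fin_cases i <;> fin_cases j <;>
    simp [gadK, Matrix.mul_apply, Fin.sum_univ_two, Matrix.one_apply]
  all_goals push_cast at hp1 hγ1 ⊢; grind

lemma enorm3_gad_bloch_vector {γ : ℝ} (hγ : γ ≤ 1) (Θ Φ : ℝ) :
    enorm3 ![√(1 - γ) * Real.sin Θ * Real.cos Φ,
             -(√(1 - γ) * Real.sin Θ * Real.sin Φ), (1 - γ) * Real.cos Θ]
      = √((1 - γ) * (Real.sin Θ ^ 2 + (1 - γ) * Real.cos Θ ^ 2)) := by
  have hsq : √(1 - γ) ^ 2 = 1 - γ := Real.sq_sqrt (by linarith)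
  rw [enorm3]
  congr 1
  simp only [Matrix.cons_val_zero, Matrix.cons_val_one, Matrix.cons_val_two, Matrix.head_cons,
    Matrix.tail_cons]
  linear_combination Real.sin Θ ^ 2 * (Real.cos Φ ^ 2 + Real.sin Φ ^ 2) * hsq
    + (1 - γ) * Real.sin Θ ^ 2 * Real.cos_sq_add_sin_sq Φ

/-- The GAD Kraus operators are trace preserving, and the conjugate GAD channel maps `Π±`
to the POVM `(1/2)((1 ± (2p−1)γcosΘ)𝟙 ± v·σ)` with
`v = (√(1−γ) sinΘ cosΦ, −√(1−γ) sinΘ sinΦ, (1−γ)cosΘ)`, whose bias has magnitude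
`|(2p−1)γcosΘ|` and whose sharpness is `√((1−γ)(sin²Θ + (1−γ)cos²Θ))`. -/
theorem stmt13 (p γ : ℝ) (hp : 0 ≤ p ∧ p ≤ 1) (hγ : 0 ≤ γ ∧ γ ≤ 1) (Θ Φ : ℝ) :
    (∑ i, (gadK p γ i)ᴴ * gadK p γ i = 1) ∧
    (∀ s : ℝ, s = 1 ∨ s = -1 →
      ∑ i, (gadK p γ i)ᴴ * projQ Θ Φ s * gadK p γ i
        = (1/2 : ℂ) • ((((1 + s * ((2*p - 1) * γ * Real.cos Θ) : ℝ)) : ℂ) • 1 + (s : ℂ) •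
            dotσ ![Real.sqrt (1 - γ) * Real.sin Θ * Real.cos Φ,
                   -(Real.sqrt (1 - γ) * Real.sin Θ * Real.sin Φ),
                   (1 - γ) * Real.cos Θ])) ∧
    enorm3 ![Real.sqrt (1 - γ) * Real.sin Θ * Real.cos Φ,
             -(Real.sqrt (1 - γ) * Real.sin Θ * Real.sin Φ), (1 - γ) * Real.cos Θ]
      = Real.sqrt ((1 - γ) * (Real.sin Θ ^ 2 + (1 - γ) * Real.cos Θ ^ 2)) := by
  refine ⟨?_, fun s _ => ?_, enorm3_gad_bloch_vector hγ.2 Θ Φ⟩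
  · have hzero : ![(0 : ℝ), 0, 0] = 0 := by
      ext i; fin_cases i <;> simp
    simpa [gadDual, hzero, dotσ_zero] using gadDual_bloch hp hγ 1 0
  · have hproj : projQ Θ Φ s = (1 / 2 : ℂ) • (((1 : ℝ) : ℂ) • 1 + dotσ (s •
        ![Real.sin Θ * Real.cos Φ, -(Real.sin Θ * Real.sin Φ), Real.cos Θ])) := by
      rw [projQ, dotσ_smul, ← Qobs_eq_dotσ, ofReal_one, one_smul]
    rw [← gadDual, hproj, gadDual_smul, gadDual_bloch hp hγ, ← dotσ_smul]
    congr 3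
    · simp; ring
    · ext i; fin_cases i <;> simp <;> ring
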